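/- Consistency of conversion: in the dependent type theory described, the two canonical Booleans are not judgmentally convertible; that is, the judgement () ⊢ 0 conv 1 : N₂ is not derivable. -/

import Mathlib

/-!
Martin-Löf dependent type theory with conversion as a judgement:
cumulative universes `U₀ : U₁ : …`, dependent products with β- and η-conversion,
and Booleans `N₂` with `0`, `1` and the eliminator `brec`.
Terms are in de Bruijn representation (so α-equivalent terms are equal).
-/

namespace DTT

/-- Raw terms (de Bruijn indices).  In `pi A B`, `lam A t` and `brec C a₀ a₁`
the second (resp. first) argument `B`, `t`, `C` binds one variable. -/
inductive Tm : Type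
  | var : Nat → Tm
  | pi : Tm → Tm → Tm
  | lam : Tm → Tm → Tm
  | app : Tm → Tm → Tm
  | univ : Nat → Tm
  | bool : Tm
  | zero : Tm
  | one : Tm
  | brec : Tm → Tm → Tm → Tm
  deriving DecidableEq

/-- Shift by one the free variables `≥ d`. -/
def lift (d : Nat) : Tm → Tm
  | .var k => if k < d then .var k else .var (k + 1)
  | .pi A B => .pi (lift d A) (lift (d + 1) B)
  | .lam A t => .lam (lift d A) (lift (d + 1) t)
  | .app t u => .app (lift d t) (lift d u)
  | .univ n => .univ n
  | .bool => .bool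
  | .zero => .zero
  | .one => .one
  | .brec C a b => .brec (lift (d + 1) C) (lift d a) (lift d b)

/-- Shift all free variables up by `n`. -/
def shiftN (n : Nat) (t : Tm) : Tm := (lift 0)^[n] t

/-- Substitute `u` for the variable `d` (lowering the variables above `d`). -/
def subst (d : Nat) (u : Tm) : Tm → Tm
  | .var k => if k < d then .var k else if k = d then shiftN d u else .var (k - 1)
  | .pi A B => .pi (subst d u A) (subst (d + 1) u B)
  | .lam A t => .lam (subst d u A) (subst (d + 1) u t)
  | .app t v => .app (subst d u t) (subst d u v)
  | .univ n => .univ n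
  | .bool => .bool
  | .zero => .zero
  | .one => .one
  | .brec C a b => .brec (subst (d + 1) u C) (subst d u a) (subst d u b)

/-- `B(u)` : substitution for the last bound variable. -/
abbrev subst0 (B u : Tm) : Tm := subst 0 u B

/-- A context is a list of types, most recent binding first. -/
abbrev Ctx := List Tm

mutual
  /-- Well-formed contexts `Γ ⊢`. -/
  inductive WfCtx : Ctx → Prop
    | nil : WfCtx []
    | cons {Γ A n} : HasType Γ A (.univ n) → WfCtx (A :: Γ)

  /-- The typing judgement `Γ ⊢ t : A`. -/
  inductive HasType : Ctx → Tm → Tm → Prop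
    | var {Γ x A} : WfCtx Γ → Γ[x]? = some A →
        HasType Γ (.var x) (shiftN (x + 1) A)
    | pi {Γ A B n} : HasType Γ A (.univ n) → HasType (A :: Γ) B (.univ n) →
        HasType Γ (.pi A B) (.univ n)
    | lam {Γ A t B} : HasType (A :: Γ) t B →
        HasType Γ (.lam A t) (.pi A B)
    | app {Γ t u A B} : HasType Γ t (.pi A B) → HasType Γ u A →
        HasType Γ (.app t u) (subst0 B u)
    | cumul {Γ A n m} : HasType Γ A (.univ n) → n ≤ m → HasType Γ A (.univ m)
    | univ {Γ n m} : WfCtx Γ → n < m → HasType Γ (.univ n) (.univ m)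
    | bool {Γ n} : WfCtx Γ → HasType Γ .bool (.univ n)
    | zero {Γ} : WfCtx Γ → HasType Γ .zero .bool
    | one {Γ} : WfCtx Γ → HasType Γ .one .bool
    | brec {Γ C a₀ a₁ n} : HasType (.bool :: Γ) C (.univ n) →
        HasType Γ a₀ (subst0 C .zero) → HasType Γ a₁ (subst0 C .one) →
        HasType Γ (.brec C a₀ a₁) (.pi .bool C)
    | conv {Γ t A B n} : HasType Γ t A → Conv Γ A B (.univ n) → HasType Γ t B

  /-- The conversion judgement `Γ ⊢ t conv u : A`. -/
  inductive Conv : Ctx → Tm → Tm → Tm → Prop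
    | refl {Γ t A} : HasType Γ t A → Conv Γ t t A
    | euclid {Γ t u v A} : Conv Γ t v A → Conv Γ u v A → Conv Γ t u A
    | convTy {Γ t u A B n} : Conv Γ t u A → Conv Γ A B (.univ n) → Conv Γ t u B
    | cumul {Γ A B n m} : Conv Γ A B (.univ n) → n ≤ m → Conv Γ A B (.univ m)
    | piCong {Γ A₀ A₁ B₀ B₁ n} : Conv Γ A₀ A₁ (.univ n) →
        Conv (A₀ :: Γ) B₀ B₁ (.univ n) →
        Conv Γ (.pi A₀ B₀) (.pi A₁ B₁) (.univ n)
    | lamCong {Γ A₀ A₁ t₀ t₁ B n} : Conv Γ A₀ A₁ (.univ n) →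
        Conv (A₀ :: Γ) t₀ t₁ B →
        Conv Γ (.lam A₀ t₀) (.lam A₁ t₁) (.pi A₀ B)
    | appLeft {Γ t t' u A B} : Conv Γ t t' (.pi A B) → HasType Γ u A →
        Conv Γ (.app t u) (.app t' u) (subst0 B u)
    | appRight {Γ t u u' A B} : HasType Γ t (.pi A B) → Conv Γ u u' A →
        Conv Γ (.app t u) (.app t u') (subst0 B u)
    | beta {Γ A t B u} : HasType (A :: Γ) t B → HasType Γ u A →
        Conv Γ (.app (.lam A t) u) (subst0 t u) (subst0 B u)
    | eta {Γ t u A B} : HasType Γ t (.pi A B) → HasType Γ u (.pi A B) →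
        Conv (A :: Γ) (.app (lift 0 t) (.var 0)) (.app (lift 0 u) (.var 0)) B →
        Conv Γ t u (.pi A B)
    | brecCong {Γ C C' a₀ a₀' a₁ a₁' n} : Conv (.bool :: Γ) C C' (.univ n) →
        Conv Γ a₀ a₀' (subst0 C .zero) → Conv Γ a₁ a₁' (subst0 C .one) →
        Conv Γ (.brec C a₀ a₁) (.brec C' a₀' a₁') (.pi .bool C)
    | brecZero {Γ C a₀ a₁ n} : HasType (.bool :: Γ) C (.univ n) →
        HasType Γ a₀ (subst0 C .zero) → HasType Γ a₁ (subst0 C .one) →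
        Conv Γ (.app (.brec C a₀ a₁) .zero) a₀ (subst0 C .zero)
    | brecOne {Γ C a₀ a₁ n} : HasType (.bool :: Γ) C (.univ n) →
        HasType Γ a₀ (subst0 C .zero) → HasType Γ a₁ (subst0 C .one) →
        Conv Γ (.app (.brec C a₀ a₁) .one) a₁ (subst0 C .one)
end

mutual
  /-- Neutral terms. -/
  inductive Neutral : Tm → Prop
    | var (x) : Neutral (.var x)
    | app {k u} : Neutral k → Normal u → Neutral (.app k u)
    | brec {C a₀ a₁ k} : Normal C → Normal a₀ → Normal a₁ → Neutral k →
        Neutral (.app (.brec C a₀ a₁) k)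

  /-- Normal terms. -/
  inductive Normal : Tm → Prop
    | neutral {k} : Neutral k → Normal k
    | zero : Normal .zero
    | one : Normal .one
    | bool : Normal .bool
    | univ (n) : Normal (.univ n)
    | lam {A t} : Normal A → Normal t → Normal (.lam A t)
    | pi {A B} : Normal A → Normal B → Normal (.pi A B)
end

end DTT

/-!
Erase the types: `Π`, the universes and `N₂` all become one constant `box`, `λ` forgets its domain,
and `brec C a₀ a₁` becomes `λ x. boolRec x a₀ a₁`, so that no ι-redex overlaps an η-redex.
Untyped parallel βηι-reduction has the diamond property, witnessed by Takahashi's complete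
development `dev`, which contracts an η-redex before the β-redexes inside it. Hence joinability is
an equivalence relation, erasure maps conversion into it, and the distinct normal forms `0` and `1`
are not joinable.
-/

open Relation

theorem Relation.Join.map_reflTransGen {α : Type*} {r : α → α → Prop} {f : α → α}
    (hf : ∀ a b, r a b → r (f a) (f b)) {a b : α} (h : Join (ReflTransGen r) a b) :
    Join (ReflTransGen r) (f a) (f b) :=
  let ⟨c, hac, hbc⟩ := h
  ⟨f c, ReflTransGen.lift f hf _ _ hac, ReflTransGen.lift f hf _ _ hbc⟩

inductive UTm : Type
  | var : ℕ → UTm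
  | box : UTm
  | zero : UTm
  | one : UTm
  | lam : UTm → UTm
  | app : UTm → UTm → UTm
  | boolRec : UTm → UTm → UTm → UTm

namespace UTm

def lift (d : ℕ) : UTm → UTm
  | var k => if k < d then var k else var (k + 1)
  | box => box
  | zero => zero
  | one => one
  | lam t => lam (lift (d + 1) t)
  | app t u => app (lift d t) (lift d u)
  | boolRec c a b => boolRec (lift d c) (lift d a) (lift d b)

def subst (d : ℕ) (u : UTm) : UTm → UTm
  | var k => if k < d then var k else if k = d then u else var (k - 1)
  | box => box
  | zero => zero
  | one => one
  | lam t => lam (subst (d + 1) (lift 0 u) t)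
  | app t v => app (subst d u t) (subst d u v)
  | boolRec c a b => boolRec (subst d u c) (subst d u a) (subst d u b)

theorem lift_lift (t : UTm) {d e : ℕ} (h : e ≤ d) :
    lift (d + 1) (lift e t) = lift e (lift d t) := by
  induction t generalizing d e with
  | var k => simp only [lift]; split_ifs <;> simp only [lift] <;> split_ifs <;> grind
  | lam t ih => simp [lift, ih (Nat.succ_le_succ h)]
  | _ => simp_all [lift]

theorem subst_lift (t u : UTm) (d : ℕ) : subst d u (lift d t) = t := by
  induction t generalizing d u with
  | var k => simp only [lift]; split_ifs <;> simp only [subst] <;> split_ifs <;> grind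
  | _ => simp_all [lift, subst]

theorem lift_injective (d : ℕ) : Function.Injective (lift d) := fun s t h => by
  simpa only [subst_lift] using congrArg (subst d box) h

theorem subst_succ_lift (t u : UTm) {d e : ℕ} (h : e ≤ d) :
    subst (d + 1) (lift e u) (lift e t) = lift e (subst d u t) := by
  induction t generalizing d e u with
  | var k => simp only [lift, subst]; split_ifs <;> simp only [lift, subst] <;> split_ifs <;> grind
  | lam t ih => simp [lift, subst, ← ih _ (Nat.succ_le_succ h), lift_lift u (Nat.zero_le e)]
  | _ => simp_all [lift, subst]

theorem lift_subst (t u : UTm) {d e : ℕ} (h : d ≤ e) :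
    lift e (subst d u t) = subst d (lift e u) (lift (e + 1) t) := by
  induction t generalizing d e u with
  | var k => simp only [lift, subst]; split_ifs <;> simp only [lift, subst] <;> split_ifs <;> grind
  | lam t ih => simp [lift, subst, ih _ (Nat.succ_le_succ h), lift_lift u (Nat.zero_le e)]
  | _ => simp_all [lift, subst]

theorem subst_subst (t u v : UTm) {d e : ℕ} (h : e ≤ d) :
    subst d u (subst e v t) = subst e (subst d u v) (subst (d + 1) (lift e u) t) := by
  induction t generalizing d e u v with
  | var k =>
    simp only [subst]; split_ifs <;> simp only [subst, subst_lift] <;> grind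
  | lam t ih =>
    simp [subst, ih _ _ (Nat.succ_le_succ h), lift_lift u (Nat.zero_le e),
      subst_succ_lift v u (Nat.zero_le d)]
  | _ => simp_all [subst]

theorem subst_var_lift_succ (t : UTm) (d : ℕ) : subst d (var d) (lift (d + 1) t) = t := by
  induction t generalizing d with
  | var k => simp only [lift]; split_ifs <;> simp only [subst] <;> split_ifs <;> grind
  | lam t ih => simp [lift, subst, ih]
  | _ => simp_all [lift, subst]

theorem lift_eq_lam {s c : UTm} {d : ℕ} (h : lift d s = lam c) :
    ∃ c₀, s = lam c₀ ∧ c = lift (d + 1) c₀ := by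
  cases s <;> simp only [lift, reduceCtorEq, lam.injEq] at h
  · split_ifs at h
  · exact ⟨_, rfl, h.symm⟩

def size : UTm → ℕ
  | lam t => size t + 1
  | app t u => size t + size u + 1
  | boolRec c a b => size c + size a + size b + 1
  | _ => 1

theorem size_lift (t : UTm) (d : ℕ) : size (lift d t) = size t := by
  induction t generalizing d with
  | var k => simp only [lift]; split_ifs <;> rfl
  | _ => simp_all [lift, size]

def Fresh (d : ℕ) : UTm → Prop
  | var k => k ≠ d
  | lam t => Fresh (d + 1) t
  | app t u => Fresh d t ∧ Fresh d u
  | boolRec c a b => Fresh d c ∧ Fresh d a ∧ Fresh d b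
  | _ => True

theorem fresh_lift (t : UTm) (d : ℕ) : Fresh d (lift d t) := by
  induction t generalizing d with
  | var k => simp only [lift]; split_ifs <;> simp only [Fresh] <;> omega
  | _ => simp_all [lift, Fresh]

theorem fresh_succ_lift_iff (t : UTm) {d e : ℕ} (h : e ≤ d) :
    Fresh (d + 1) (lift e t) ↔ Fresh d t := by
  induction t generalizing d e with
  | var k => simp only [lift]; split_ifs <;> simp only [Fresh] <;> omega
  | lam t ih => simp [lift, Fresh, ih (Nat.succ_le_succ h)]
  | _ => simp_all [lift, Fresh]

theorem Fresh.subst {t u : UTm} {d e : ℕ} (ht : Fresh (d + 1) t) (hu : Fresh d u) (h : e ≤ d) :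
    Fresh d (subst e u t) := by
  induction t generalizing d e u with
  | var k => simp only [UTm.subst]; split_ifs <;> simp_all only [Fresh] <;> omega
  | lam t ih =>
    exact ih ht ((fresh_succ_lift_iff u (Nat.zero_le d)).2 hu) (Nat.succ_le_succ h)
  | _ => simp_all [UTm.subst, Fresh]

theorem lift_subst_of_fresh {t : UTm} {d : ℕ} (ht : Fresh d t) (u : UTm) :
    lift d (subst d u t) = t := by
  induction t generalizing d u with
  | var k => simp only [UTm.subst]; split_ifs <;> simp_all only [Fresh, lift] <;> grind
  | lam t ih => simp [UTm.subst, lift, ih ht]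
  | _ => simp_all [UTm.subst, lift, Fresh]

inductive Par : UTm → UTm → Prop
  | var (k : ℕ) : Par (var k) (var k)
  | box : Par box box
  | zero : Par zero zero
  | one : Par one one
  | lam {b b'} : Par b b' → Par (lam b) (lam b')
  | app {f f' a a'} : Par f f' → Par a a' → Par (app f a) (app f' a')
  | boolRec {c c' a a' b b'} : Par c c' → Par a a' → Par b b' →
      Par (boolRec c a b) (boolRec c' a' b')
  | beta {b b' a a'} : Par b b' → Par a a' → Par (app (lam b) a) (subst 0 a' b')
  | eta {s s'} : Par s s' → Par (lam (app (lift 0 s) (var 0))) s'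
  | boolRecZero {a a' b} : Par a a' → Par (boolRec zero a b) a'
  | boolRecOne {a b b'} : Par b b' → Par (boolRec one a b) b'

theorem Par.refl (t : UTm) : Par t t := by
  induction t with
  | var k => exact .var k
  | box => exact .box
  | zero => exact .zero
  | one => exact .one
  | lam _ ih => exact ih.lam
  | app _ _ ihf iha => exact ihf.app iha
  | boolRec _ _ _ ihc iha ihb => exact ihc.boolRec iha ihb

theorem Par.lift {t t' : UTm} (h : Par t t') (d : ℕ) : Par (t.lift d) (t'.lift d) := by
  induction h generalizing d with
  | beta _ _ ihb iha =>
    rw [UTm.lift_subst _ _ (Nat.zero_le d)]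
    exact (ihb (d + 1)).beta (iha d)
  | eta _ ih =>
    simpa only [UTm.lift, lift_lift _ (Nat.zero_le d), Nat.zero_lt_succ, if_true] using (ih d).eta
  | lam _ ih => exact (ih (d + 1)).lam
  | app _ _ ihf iha => exact (ihf d).app (iha d)
  | boolRec _ _ _ ihc iha ihb => exact (ihc d).boolRec (iha d) (ihb d)
  | boolRecZero _ ih => exact (ih d).boolRecZero
  | boolRecOne _ ih => exact (ih d).boolRecOne
  | _ => exact Par.refl _

theorem Par.subst {t t' u u' : UTm} (ht : Par t t') (hu : Par u u') (d : ℕ) :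
    Par (UTm.subst d u t) (UTm.subst d u' t') := by
  induction ht generalizing d u u' with
  | var k => simp only [UTm.subst]; split_ifs <;> first | exact hu | exact Par.refl _
  | lam _ ih => exact (ih (hu.lift 0) (d + 1)).lam
  | app _ _ ihf iha => exact (ihf hu d).app (iha hu d)
  | boolRec _ _ _ ihc iha ihb => exact (ihc hu d).boolRec (iha hu d) (ihb hu d)
  | beta _ _ ihb iha =>
    rw [UTm.subst_subst _ _ _ (Nat.zero_le d)]
    exact (ihb (hu.lift 0) (d + 1)).beta (iha hu d)
  | eta _ ih =>
    simpa only [UTm.subst, subst_succ_lift _ _ (Nat.zero_le d), Nat.zero_lt_succ, if_true]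
      using (ih hu d).eta
  | boolRecZero _ ih => exact (ih hu d).boolRecZero
  | boolRecOne _ ih => exact (ih hu d).boolRecOne
  | _ => exact Par.refl _

theorem Par.fresh {t t' : UTm} (h : Par t t') {d : ℕ} (ht : Fresh d t) : Fresh d t' := by
  induction h generalizing d with
  | lam _ ih => exact ih ht
  | app _ _ ihf iha => exact ⟨ihf ht.1, iha ht.2⟩
  | boolRec _ _ _ ihc iha ihb => exact ⟨ihc ht.1, iha ht.2.1, ihb ht.2.2⟩
  | beta _ _ ihb iha => exact (ihb ht.1).subst (iha ht.2) (Nat.zero_le d)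
  | eta _ ih => exact ih ((fresh_succ_lift_iff _ (Nat.zero_le d)).1 ht.1)
  | boolRecZero _ ih => exact ih ht.2.1
  | boolRecOne _ ih => exact ih ht.2.2
  | _ => exact ht

theorem par_lift_inv {s u : UTm} {d : ℕ} (h : Par (s.lift d) u) :
    ∃ s', u = s'.lift d ∧ Par s s' :=
  ⟨UTm.subst d UTm.box u, (lift_subst_of_fresh (h.fresh (fresh_lift s d)) _).symm, by
    simpa only [subst_lift] using h.subst (Par.refl UTm.box) d⟩

theorem par_zero_inv {u : UTm} (h : Par zero u) : u = zero := by cases h; rfl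

theorem par_one_inv {u : UTm} (h : Par one u) : u = one := by cases h; rfl

theorem par_lam_inv {b u : UTm} (h : Par (lam b) u) :
    (∃ b', u = lam b' ∧ Par b b') ∨ ∃ s, b = app (lift 0 s) (var 0) ∧ Par s u := by
  cases h with
  | lam h => exact .inl ⟨_, rfl, h⟩
  | eta h => exact .inr ⟨_, rfl, h⟩

theorem par_etaBody_inv {s b' : UTm} (h : Par (app (lift 0 s) (var 0)) b') :
    (∃ s', Par s s' ∧ b' = app (lift 0 s') (var 0)) ∨ ∃ c, s = lam c ∧ Par c b' := by
  generalize hf : lift 0 s = f at h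
  cases h with
  | app hf' hv =>
    cases hv
    obtain ⟨s', rfl, hs⟩ := par_lift_inv (hf ▸ hf')
    exact .inl ⟨s', hs, rfl⟩
  | beta hc hv =>
    cases hv
    obtain ⟨c, rfl, rfl⟩ := lift_eq_lam hf
    obtain ⟨c', rfl, hc'⟩ := par_lift_inv hc
    exact .inr ⟨c, rfl, by rwa [subst_var_lift_succ]⟩

theorem par_eta_app {s a u : UTm} (h : Par (app s a) u) :
    Par (app (lam (app (lift 0 s) (var 0))) a) u := by
  cases h with
  | app hs ha => exact hs.eta.app ha
  | beta hc ha =>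
    refine Par.beta ?_ ha
    simpa only [UTm.lift, subst_var_lift_succ] using (hc.lift 1).beta (Par.var 0)

open Classical in
noncomputable def dev : UTm → UTm
  | lam b =>
    if h : ∃ s, b = app (lift 0 s) (var 0) then dev h.choose else lam (dev b)
  | app (lam b) a =>
    if h : ∃ s, b = app (lift 0 s) (var 0) then dev (app h.choose a)
    else subst 0 (dev a) (dev b)
  | app f a => app (dev f) (dev a)
  | boolRec zero a _ => dev a
  | boolRec one _ b => dev b
  | boolRec c a b => boolRec (dev c) (dev a) (dev b)
  | var k => var k
  | box => box
  | zero => zero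
  | one => one
termination_by t => size t
decreasing_by
  all_goals
    try have hs := congrArg size h.choose_spec
    simp_all only [size, size_lift]
    omega

theorem dev_lam_eta (s : UTm) : dev (lam (app (lift 0 s) (var 0))) = dev s := by
  have h : ∃ s', app (lift 0 s) (var 0) = app (lift 0 s') (var 0) := ⟨s, rfl⟩
  rw [dev, dif_pos h, lift_injective 0 (app.inj h.choose_spec).1.symm]

theorem dev_lam {b : UTm} (h : ¬∃ s, b = app (lift 0 s) (var 0)) : dev (lam b) = lam (dev b) := by
  rw [dev, dif_neg h]

theorem dev_app_lam_eta (s a : UTm) :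
    dev (app (lam (app (lift 0 s) (var 0))) a) = dev (app s a) := by
  have h : ∃ s', app (lift 0 s) (var 0) = app (lift 0 s') (var 0) := ⟨s, rfl⟩
  rw [dev, dif_pos h, lift_injective 0 (app.inj h.choose_spec).1.symm]

theorem dev_app_lam {b : UTm} (h : ¬∃ s, b = app (lift 0 s) (var 0)) (a : UTm) :
    dev (app (lam b) a) = subst 0 (dev a) (dev b) := by
  rw [dev, dif_neg h]

theorem dev_app {f : UTm} (hf : ∀ b, f ≠ lam b) (a : UTm) : dev (app f a) = app (dev f) (dev a) := by
  cases f <;> simp_all [dev]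

theorem dev_boolRec_zero (a b : UTm) : dev (boolRec zero a b) = dev a := by rw [dev]

theorem dev_boolRec_one (a b : UTm) : dev (boolRec one a b) = dev b := by rw [dev]

theorem dev_boolRec {c : UTm} (h₀ : c ≠ zero) (h₁ : c ≠ one) (a b : UTm) :
    dev (boolRec c a b) = boolRec (dev c) (dev a) (dev b) := by
  cases c <;> simp_all [dev]

theorem par_dev_lam_eta {s u : UTm} (ih : ∀ {v}, Par s v → Par v (dev s))
    (h : Par (lam (app (lift 0 s) (var 0))) u) : Par u (dev s) := by
  rcases par_lam_inv h with ⟨b', rfl, hb⟩ | ⟨s₀, hs₀, hs⟩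
  · rcases par_etaBody_inv hb with ⟨s', hs, rfl⟩ | ⟨c, rfl, hc⟩
    · exact (ih hs).eta
    · exact ih hc.lam
  · obtain rfl := lift_injective 0 (app.inj hs₀).1
    exact ih hs

theorem par_dev_app_lam_eta {s a u : UTm} (ih : ∀ {v}, Par (app s a) v → Par v (dev (app s a)))
    (h : Par (app (lam (app (lift 0 s) (var 0))) a) u) : Par u (dev (app s a)) := by
  cases h with
  | app hf ha =>
    rcases par_lam_inv hf with ⟨b', rfl, hb⟩ | ⟨s₀, hs₀, hs⟩
    · rcases par_etaBody_inv hb with ⟨s', hs, rfl⟩ | ⟨c, rfl, hc⟩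
      · exact par_eta_app (ih (hs.app ha))
      · exact ih (hc.lam.app ha)
    · obtain rfl := lift_injective 0 (app.inj hs₀).1
      exact ih (hs.app ha)
  | beta hb ha =>
    rcases par_etaBody_inv hb with ⟨s', hs, rfl⟩ | ⟨c, rfl, hc⟩
    · simpa [subst, subst_lift] using ih (hs.app ha)
    · exact ih (hc.beta ha)

theorem par_dev_boolRec {c a b u : UTm} (ihc : ∀ {v}, Par c v → Par v (dev c))
    (iha : ∀ {v}, Par a v → Par v (dev a)) (ihb : ∀ {v}, Par b v → Par v (dev b))
    (h : Par (boolRec c a b) u) : Par u (dev (boolRec c a b)) := by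
  cases h with
  | boolRec hc ha hb =>
    by_cases h₀ : c = zero
    · subst h₀
      obtain rfl := par_zero_inv hc
      rw [dev_boolRec_zero]
      exact (iha ha).boolRecZero
    by_cases h₁ : c = one
    · subst h₁
      obtain rfl := par_one_inv hc
      rw [dev_boolRec_one]
      exact (ihb hb).boolRecOne
    rw [dev_boolRec h₀ h₁]
    exact (ihc hc).boolRec (iha ha) (ihb hb)
  | boolRecZero ha => rw [dev_boolRec_zero]; exact iha ha
  | boolRecOne hb => rw [dev_boolRec_one]; exact ihb hb

theorem par_dev {t u : UTm} (h : Par t u) : Par u (dev t) := by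
  match t with
  | var _ | box | zero | one => cases h; rw [dev]; exact .refl _
  | lam b =>
    by_cases hη : ∃ s, b = app (lift 0 s) (var 0)
    · obtain ⟨s, rfl⟩ := hη
      rw [dev_lam_eta]
      exact par_dev_lam_eta (par_dev ·) h
    rw [dev_lam hη]
    rcases par_lam_inv h with ⟨b', rfl, hb⟩ | ⟨s, rfl, -⟩
    · exact (par_dev hb).lam
    · exact absurd ⟨s, rfl⟩ hη
  | app f a =>
    by_cases hfl : ∃ b, f = lam b
    · obtain ⟨b, rfl⟩ := hfl
      by_cases hη : ∃ s, b = app (lift 0 s) (var 0)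
      · obtain ⟨s, rfl⟩ := hη
        rw [dev_app_lam_eta]
        exact par_dev_app_lam_eta (par_dev ·) h
      rw [dev_app_lam hη]
      cases h with
      | app hf ha =>
        rcases par_lam_inv hf with ⟨b', rfl, hb⟩ | ⟨s, rfl, -⟩
        · exact (par_dev hb).beta (par_dev ha)
        · exact absurd ⟨s, rfl⟩ hη
      | beta hb ha => exact (par_dev hb).subst (par_dev ha) 0
    rw [dev_app (fun b hb => hfl ⟨b, hb⟩)]
    cases h with
    | app hf ha => exact (par_dev hf).app (par_dev ha)
    | beta => exact absurd ⟨_, rfl⟩ hfl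
  | boolRec c a b => exact par_dev_boolRec (par_dev ·) (par_dev ·) (par_dev ·) h
termination_by size t
decreasing_by
  all_goals subst_vars; simp only [size, size_lift]; omega

theorem par_diamond {t u v : UTm} (hu : Par t u) (hv : Par t v) : ∃ w, Par u w ∧ Par v w :=
  ⟨dev t, par_dev hu, par_dev hv⟩

abbrev Red : UTm → UTm → Prop := ReflTransGen Par

theorem equivalence_join_red : Equivalence (Join Red) :=
  equivalence_join_reflTransGen fun _ _ _ hu hv =>
    let ⟨w, huw, hvw⟩ := par_diamond hu hv
    ⟨w, .single huw, .single hvw⟩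

theorem eq_zero_of_red_zero {u : UTm} (h : Red zero u) : u = zero := by
  induction h with
  | refl => rfl
  | tail _ h ih => exact par_zero_inv (ih ▸ h)

theorem eq_one_of_red_one {u : UTm} (h : Red one u) : u = one := by
  induction h with
  | refl => rfl
  | tail _ h ih => exact par_one_inv (ih ▸ h)

theorem not_join_zero_one : ¬ Join Red zero one := fun ⟨_, h₀, h₁⟩ =>
  UTm.noConfusion ((eq_zero_of_red_zero h₀).symm.trans (eq_one_of_red_one h₁))

theorem join_app {f f' a a' : UTm} (hf : Join Red f f') (ha : Join Red a a') :
    Join Red (app f a) (app f' a') :=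
  equivalence_join_red.trans (hf.map_reflTransGen fun _ _ h => h.app (.refl a))
    (ha.map_reflTransGen fun _ _ h => (Par.refl f').app h)

theorem join_boolRec {c c' a a' b b' : UTm} (hc : Join Red c c') (ha : Join Red a a')
    (hb : Join Red b b') : Join Red (boolRec c a b) (boolRec c' a' b') :=
  equivalence_join_red.trans (hc.map_reflTransGen fun _ _ h => h.boolRec (.refl a) (.refl b)) <|
    equivalence_join_red.trans (ha.map_reflTransGen fun _ _ h => (Par.refl c').boolRec h (.refl b))
      (hb.map_reflTransGen fun _ _ h => (Par.refl c').boolRec (.refl a') h)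

theorem join_of_par {t u : UTm} (h : Par t u) : Join Red t u := ⟨u, .single h, .refl⟩

end UTm

namespace DTT

def erase : Tm → UTm
  | .var k => .var k
  | .pi _ _ => .box
  | .lam _ t => .lam (erase t)
  | .app t u => .app (erase t) (erase u)
  | .univ _ => .box
  | .bool => .box
  | .zero => .zero
  | .one => .one
  | .brec _ a₀ a₁ => .lam (.boolRec (.var 0) (UTm.lift 0 (erase a₀)) (UTm.lift 0 (erase a₁)))

theorem erase_lift (t : Tm) (d : ℕ) : erase (lift d t) = UTm.lift d (erase t) := by
  induction t generalizing d with
  | var k => simp only [lift, erase, UTm.lift]; split_ifs <;> rfl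
  | brec C a₀ a₁ _ ih₀ ih₁ =>
    simp [lift, erase, UTm.lift, ih₀, ih₁, UTm.lift_lift _ (Nat.zero_le d)]
  | _ => simp_all [lift, erase, UTm.lift]

theorem erase_shiftN_succ (u : Tm) (n : ℕ) :
    erase (shiftN (n + 1) u) = UTm.lift 0 (erase (shiftN n u)) := by
  rw [shiftN, Function.iterate_succ_apply', erase_lift, ← shiftN]

theorem erase_subst (t u : Tm) (d : ℕ) :
    erase (subst d u t) = UTm.subst d (erase (shiftN d u)) (erase t) := by
  induction t generalizing d with
  | var k => simp only [subst, erase, UTm.subst]; split_ifs <;> rfl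
  | brec C a₀ a₁ _ ih₀ ih₁ =>
    simp [subst, erase, UTm.subst, ih₀, ih₁, UTm.subst_succ_lift _ _ (Nat.zero_le d)]
  | _ => simp_all [subst, erase, UTm.subst, erase_shiftN_succ]

theorem erase_subst0 (t u : Tm) : erase (subst0 t u) = UTm.subst 0 (erase u) (erase t) :=
  erase_subst t u 0

theorem Conv.join_erase {Γ : Ctx} {t u A : Tm} (h : Conv Γ t u A) :
    Join UTm.Red (erase t) (erase u) := by
  have hJ := UTm.equivalence_join_red
  apply Conv.rec (motive_1 := fun _ _ => True) (motive_2 := fun _ _ _ _ => True)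
    (motive_3 := fun _ t u _ _ => Join UTm.Red (erase t) (erase u)) (t := h)
  all_goals intros
  all_goals first | exact trivial | skip
  case refl => exact hJ.refl _
  case euclid ih₁ ih₂ => exact hJ.trans ih₁ (hJ.symm ih₂)
  case convTy ih _ => exact ih
  case cumul ih => exact ih
  case piCong => exact hJ.refl _
  case lamCong ih => exact ih.map_reflTransGen fun _ _ => UTm.Par.lam
  case appLeft ih _ => exact UTm.join_app ih (hJ.refl _)
  case appRight ih => exact UTm.join_app (hJ.refl _) ih
  case beta =>
    rw [erase_subst0]
    exact UTm.join_of_par ((UTm.Par.refl _).beta (UTm.Par.refl _))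
  case eta ih =>
    simp only [erase, erase_lift] at ih
    exact hJ.trans (hJ.symm (UTm.join_of_par (UTm.Par.refl _).eta)) <|
      hJ.trans (ih.map_reflTransGen fun _ _ => UTm.Par.lam) (UTm.join_of_par (UTm.Par.refl _).eta)
  case brecCong ih₀ ih₁ =>
    exact (UTm.join_boolRec (hJ.refl _) (ih₀.map_reflTransGen fun _ _ h => h.lift 0)
      (ih₁.map_reflTransGen fun _ _ h => h.lift 0)).map_reflTransGen fun _ _ => UTm.Par.lam
  case brecZero =>
    refine ⟨_, .tail (.single ((UTm.Par.refl _).beta .zero)) ?_, .refl⟩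
    simpa [UTm.subst, UTm.subst_lift] using UTm.Par.boolRecZero (UTm.Par.refl _)
  case brecOne =>
    refine ⟨_, .tail (.single ((UTm.Par.refl _).beta .one)) ?_, .refl⟩
    simpa [UTm.subst, UTm.subst_lift] using UTm.Par.boolRecOne (UTm.Par.refl _)

end DTT

open DTT in
/-- **Consistency of conversion**: `() ⊢ 0 conv 1 : N₂` is not derivable. -/
theorem zero_not_conv_one : ¬ Conv [] .zero .one .bool := by
  intro h
  exact UTm.not_join_zero_one h.join_erase
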